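/- Subadditivity of excess functional information: if the pair (X₁,Y₁) is independent of the pair (X₂,Y₂), then Ψ((X₁,X₂) → (Y₁,Y₂)) ≤ Ψ(X₁ → Y₁) + Ψ(X₂ → Y₂). -/

import Mathlib

open MeasureTheory ProbabilityTheory Real
open scoped ENNReal

noncomputable section
open Classical in

/-- Kullback–Leibler divergence in bits (base-2 logarithm). -/
def klBits {α : Type*} [MeasurableSpace α] (P Q : Measure α) : ℝ≥0∞ :=
  if P ≪ Q ∧ Integrable (fun x => Real.logb 2 (P.rnDeriv Q x).toReal) P
  then ENNReal.ofReal (∫ x, Real.logb 2 (P.rnDeriv Q x).toReal ∂P)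
  else ⊤

/-- Mutual information `I(X;Y)` in bits: the KL divergence between the joint law and the
product of the marginal laws. -/
def miBits {Ω 𝒳 𝒴 : Type*} [MeasurableSpace Ω] [MeasurableSpace 𝒳] [MeasurableSpace 𝒴]
    (μ : Measure Ω) (X : Ω → 𝒳) (Y : Ω → 𝒴) : ℝ≥0∞ :=
  klBits (μ.map (fun ω => (X ω, Y ω))) ((μ.map X).prod (μ.map Y))

/-- Conditional mutual information `I(X;Z|Y)` in bits, defined via the chain rule
`I(X;Z|Y) = I(X;(Z,Y)) - I(X;Y)`. -/
def cmiBits {Ω 𝒳 𝒵 𝒴 : Type*} [MeasurableSpace Ω] [MeasurableSpace 𝒳] [MeasurableSpace 𝒵]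
    [MeasurableSpace 𝒴] (μ : Measure Ω) (X : Ω → 𝒳) (Z : Ω → 𝒵) (Y : Ω → 𝒴) : ℝ≥0∞ :=
  miBits μ X (fun ω => (Z ω, Y ω)) - miBits μ X Y

/-- Entropy `H(X)` in bits, as `I(X;X)` (equals the Shannon entropy for discrete `X`,
and `∞` otherwise). -/
def entBits {Ω 𝒳 : Type*} [MeasurableSpace Ω] [MeasurableSpace 𝒳]
    (μ : Measure Ω) (X : Ω → 𝒳) : ℝ≥0∞ :=
  miBits μ X X

/-- Conditional entropy `H(Y|Z)` in bits, as `I(Y;Y|Z)`. -/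
def condEntBits {Ω 𝒴 𝒵 : Type*} [MeasurableSpace Ω] [MeasurableSpace 𝒴] [MeasurableSpace 𝒵]
    (μ : Measure Ω) (Y : Ω → 𝒴) (Z : Ω → 𝒵) : ℝ≥0∞ :=
  cmiBits μ Y Y Z

/-- Mutual information of a joint distribution on a product space. -/
def miOfJoint {𝒳 𝒴 : Type*} [MeasurableSpace 𝒳] [MeasurableSpace 𝒴]
    (ν : Measure (𝒳 × 𝒴)) : ℝ≥0∞ :=
  miBits ν Prod.fst Prod.snd

/-- **Excess functional information** `Ψ(X→Y)` of a joint law `ν` on `𝒳 × 𝒴`: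
the infimum of `I(X;Z|Y)` over all random variables `Z` independent of `X` such that `Y` is
a.s. a measurable function of `(X,Z)`.  `Z` is realized on the canonical extension
`𝒳 × 𝒴 × ℝ` of the joint law, `ℝ` serving as a universal standard Borel value space. -/
def excessFI {𝒳 𝒴 : Type*} [MeasurableSpace 𝒳] [MeasurableSpace 𝒴]
    (ν : Measure (𝒳 × 𝒴)) : ℝ≥0∞ :=
  sInf { r : ℝ≥0∞ |
    ∃ ρ : Measure (𝒳 × 𝒴 × ℝ), IsProbabilityMeasure ρ ∧
      ρ.map (fun p => (p.1, p.2.1)) = ν ∧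
      IndepFun (fun p : 𝒳 × 𝒴 × ℝ => p.1) (fun p => p.2.2) ρ ∧
      (∃ g : 𝒳 × ℝ → 𝒴, Measurable g ∧
        (fun p : 𝒳 × 𝒴 × ℝ => p.2.1) =ᵐ[ρ] fun p => g (p.1, p.2.2)) ∧
      r = cmiBits ρ (fun p : 𝒳 × 𝒴 × ℝ => p.1) (fun p => p.2.2) (fun p => p.2.1) }

/-- Excess functional information `Ψ(X→Y)` of a pair of random variables. -/
def excessFIRV {Ω 𝒳 𝒴 : Type*} [MeasurableSpace Ω] [MeasurableSpace 𝒳] [MeasurableSpace 𝒴]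
    (μ : Measure Ω) (X : Ω → 𝒳) (Y : Ω → 𝒴) : ℝ≥0∞ :=
  excessFI (μ.map (fun ω => (X ω, Y ω)))

/-! Run functional representations `(X₁, Y₁, Z₁) ∼ ρ₁` and `(X₂, Y₂, Z₂) ∼ ρ₂` independently, under
`ρ₁ ⊗ ρ₂`. Then `Z = (Z₁, Z₂)` is independent of `X = (X₁, X₂)`, `Y = (Y₁, Y₂)` is a function of
`(X, Z)`, and `(X, Y)` has the law of the original pair because `(X₁, Y₁) ⫫ (X₂, Y₂)`. Mutual
information is additive over independent pairs (the KL divergence is additive on product measures),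
so `I(X;Z|Y) = I(X;ZY) - I(X;Y) ≤ I(X₁;Z₁|Y₁) + I(X₂;Z₂|Y₂)`, with `≤` only because subtraction
in `ℝ≥0∞` truncates. Finally `ℝ × ℝ` is Borel isomorphic to `ℝ`, so `(Z₁, Z₂)` is admissible in
the definition of `Ψ`. -/
open InformationTheory

section KullbackLeibler

variable {α β : Type*} [MeasurableSpace α] [MeasurableSpace β]

lemma klBits_eq_klDiv_div (P Q : Measure α) [IsProbabilityMeasure P] [IsProbabilityMeasure Q] :
    klBits P Q = klDiv P Q / ENNReal.ofReal (log 2) := by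
  have hlog2 : 0 < log 2 := log_pos one_lt_two
  have hlogb : (fun x => logb 2 (P.rnDeriv Q x).toReal) = fun x => llr P Q x * (log 2)⁻¹ := rfl
  rw [klBits, hlogb, integrable_mul_const_iff (inv_ne_zero hlog2.ne').isUnit]
  by_cases h : P ≪ Q ∧ Integrable (llr P Q) P
  · rw [if_pos h, klDiv_of_ac_of_integrable h.1 h.2, integral_mul_const,
      ← div_eq_mul_inv, ENNReal.ofReal_div_of_pos hlog2]
    simp
  · rw [if_neg h, klDiv_eq_top_iff.mpr fun hac hint => h ⟨hac, hint⟩,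
      ENNReal.top_div_of_ne_top ENNReal.ofReal_ne_top]

lemma klDiv_map_measurableEquiv (e : α ≃ᵐ β) (P Q : Measure α) [IsFiniteMeasure P]
    [IsFiniteMeasure Q] : klDiv (P.map e) (Q.map e) = klDiv P Q := by
  refine le_antisymm (klDiv_map_le P Q e.measurable) ?_
  simpa only [MeasurableEquiv.map_symm_map] using
    klDiv_map_le (P.map e) (Q.map e) e.symm.measurable

theorem klDiv_prod (P₁ Q₁ : Measure α) (P₂ Q₂ : Measure β) [IsProbabilityMeasure P₁]
    [IsProbabilityMeasure Q₁] [IsProbabilityMeasure P₂] [IsProbabilityMeasure Q₂] :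
    klDiv (P₁.prod P₂) (Q₁.prod Q₂) = klDiv P₁ Q₁ + klDiv P₂ Q₂ := by
  have hright : klDiv (P₁.prod P₂) (P₁.prod Q₂) = klDiv P₂ Q₂ := by
    have hswap : ⇑(MeasurableEquiv.prodComm : α × β ≃ᵐ β × α) = Prod.swap := rfl
    rw [← klDiv_map_measurableEquiv MeasurableEquiv.prodComm, hswap, Measure.prod_swap,
      Measure.prod_swap, ← Measure.compProd_const, ← Measure.compProd_const, klDiv_compProd_left]
  simp only [← Measure.compProd_const] at hright ⊢
  rw [klDiv_compProd_eq_add, hright]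

lemma klBits_map_measurableEquiv (e : α ≃ᵐ β) (P Q : Measure α) [IsProbabilityMeasure P]
    [IsProbabilityMeasure Q] : klBits (P.map e) (Q.map e) = klBits P Q := by
  have := Measure.isProbabilityMeasure_map (μ := P) e.measurable.aemeasurable
  have := Measure.isProbabilityMeasure_map (μ := Q) e.measurable.aemeasurable
  rw [klBits_eq_klDiv_div, klBits_eq_klDiv_div, klDiv_map_measurableEquiv]

lemma klBits_prod (P₁ Q₁ : Measure α) (P₂ Q₂ : Measure β) [IsProbabilityMeasure P₁]
    [IsProbabilityMeasure Q₁] [IsProbabilityMeasure P₂] [IsProbabilityMeasure Q₂] :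
    klBits (P₁.prod P₂) (Q₁.prod Q₂) = klBits P₁ Q₁ + klBits P₂ Q₂ := by
  simp only [klBits_eq_klDiv_div, klDiv_prod, ENNReal.add_div]

end KullbackLeibler

namespace MeasurableEquiv

def prodProdProdComm (α β γ δ : Type*) [MeasurableSpace α] [MeasurableSpace β]
    [MeasurableSpace γ] [MeasurableSpace δ] : (α × β) × γ × δ ≃ᵐ (α × γ) × β × δ where
  toEquiv := Equiv.prodProdProdComm α β γ δ
  measurable_toFun := (measurable_fst.fst.prodMk measurable_snd.fst).prodMk
    (measurable_fst.snd.prodMk measurable_snd.snd)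
  measurable_invFun := (measurable_fst.fst.prodMk measurable_snd.fst).prodMk
    (measurable_fst.snd.prodMk measurable_snd.snd)

end MeasurableEquiv

namespace MeasureTheory.Measure

variable {α β γ δ : Type*} [MeasurableSpace α] [MeasurableSpace β] [MeasurableSpace γ]
  [MeasurableSpace δ]

lemma map_prodProdProdComm_prod (μ₁ : Measure α) (ν₁ : Measure β) (μ₂ : Measure γ)
    (ν₂ : Measure δ) [SFinite μ₁] [SFinite ν₁] [SFinite μ₂] [SFinite ν₂] :
    ((μ₁.prod ν₁).prod (μ₂.prod ν₂)).map (MeasurableEquiv.prodProdProdComm α β γ δ)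
      = (μ₁.prod μ₂).prod (ν₁.prod ν₂) := by
  have hmid : MeasurePreserving (fun p : β × γ × δ => (p.2.1, p.1, p.2.2))
      (ν₁.prod (μ₂.prod ν₂)) (μ₂.prod (ν₁.prod ν₂)) :=
    (measurePreserving_prodAssoc μ₂ ν₁ ν₂).comp
      ((measurePreserving_swap.prod (MeasurePreserving.id ν₂)).comp
        ((measurePreserving_prodAssoc ν₁ μ₂ ν₂).symm MeasurableEquiv.prodAssoc))
  exact ((measurePreserving_prodAssoc μ₁ μ₂ _).symm MeasurableEquiv.prodAssoc |>.comp
    (((MeasurePreserving.id μ₁).prod hmid).comp (measurePreserving_prodAssoc μ₁ ν₁ _))).map_eq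

end MeasureTheory.Measure

namespace ProbabilityTheory

variable {Ω Ω₁ Ω₂ α β γ δ : Type*} [MeasurableSpace Ω] [MeasurableSpace Ω₁]
  [MeasurableSpace Ω₂] [MeasurableSpace α] [MeasurableSpace β] [MeasurableSpace γ]
  [MeasurableSpace δ]

lemma indepFun_map_iff {P : Measure Ω₁} [IsFiniteMeasure P] {W : Ω₁ → Ω₂} (hW : Measurable W)
    {A : Ω₂ → α} {B : Ω₂ → β} (hA : Measurable A) (hB : Measurable B) :
    IndepFun A B (P.map W) ↔ IndepFun (A ∘ W) (B ∘ W) P := by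
  rw [indepFun_iff_map_prod_eq_prod_map_map hA.aemeasurable hB.aemeasurable,
    indepFun_iff_map_prod_eq_prod_map_map (hA.comp hW).aemeasurable (hB.comp hW).aemeasurable,
    Measure.map_map (hA.prodMk hB) hW, Measure.map_map hA hW, Measure.map_map hB hW]
  rfl

lemma IndepFun.map_prodMk_prodMk {μ : Measure Ω} [IsFiniteMeasure μ] {X₁ : Ω → α}
    {Y₁ : Ω → β} {X₂ : Ω → γ} {Y₂ : Ω → δ} (hX₁ : Measurable X₁) (hY₁ : Measurable Y₁)
    (hX₂ : Measurable X₂) (hY₂ : Measurable Y₂)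
    (h : IndepFun (fun ω => (X₁ ω, Y₁ ω)) (fun ω => (X₂ ω, Y₂ ω)) μ) :
    μ.map (fun ω => ((X₁ ω, X₂ ω), (Y₁ ω, Y₂ ω)))
      = ((μ.map fun ω => (X₁ ω, Y₁ ω)).prod (μ.map fun ω => (X₂ ω, Y₂ ω))).map
          (MeasurableEquiv.prodProdProdComm α β γ δ) := by
  rw [← h.map_prod_eq_prod_map_map (hX₁.prodMk hY₁).aemeasurable (hX₂.prodMk hY₂).aemeasurable,
    Measure.map_map (MeasurableEquiv.measurable _) ((hX₁.prodMk hY₁).prodMk (hX₂.prodMk hY₂))]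
  rfl

lemma IndepFun.prodMap {ρ₁ : Measure Ω₁} {ρ₂ : Measure Ω₂} [IsProbabilityMeasure ρ₁]
    [IsProbabilityMeasure ρ₂] {A₁ : Ω₁ → α} {B₁ : Ω₁ → β} {A₂ : Ω₂ → γ} {B₂ : Ω₂ → δ}
    (hA₁ : Measurable A₁) (hB₁ : Measurable B₁) (hA₂ : Measurable A₂) (hB₂ : Measurable B₂)
    (h₁ : IndepFun A₁ B₁ ρ₁) (h₂ : IndepFun A₂ B₂ ρ₂) :
    IndepFun (Prod.map A₁ A₂) (Prod.map B₁ B₂) (ρ₁.prod ρ₂) := by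
  rw [indepFun_iff_map_prod_eq_prod_map_map (hA₁.prodMap hA₂).aemeasurable
    (hB₁.prodMap hB₂).aemeasurable, ← Measure.map_prod_map _ _ hA₁ hA₂,
    ← Measure.map_prod_map _ _ hB₁ hB₂, ← Measure.map_prodProdProdComm_prod,
    ← h₁.map_prod_eq_prod_map_map hA₁.aemeasurable hB₁.aemeasurable,
    ← h₂.map_prod_eq_prod_map_map hA₂.aemeasurable hB₂.aemeasurable,
    Measure.map_prod_map _ _ (hA₁.prodMk hB₁) (hA₂.prodMk hB₂),
    Measure.map_map (MeasurableEquiv.measurable _) ((hA₁.prodMk hB₁).prodMap (hA₂.prodMk hB₂))]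
  rfl

end ProbabilityTheory

section MutualInformation

variable {Ω Ω' 𝒳 𝒴 𝒵 𝒴' 𝒵' 𝒳₁ 𝒳₂ 𝒴₁ 𝒴₂ 𝒵₁ 𝒵₂ : Type*} [MeasurableSpace Ω]
  [MeasurableSpace Ω'] [MeasurableSpace 𝒳] [MeasurableSpace 𝒴] [MeasurableSpace 𝒵]
  [MeasurableSpace 𝒴'] [MeasurableSpace 𝒵'] [MeasurableSpace 𝒳₁] [MeasurableSpace 𝒳₂]
  [MeasurableSpace 𝒴₁] [MeasurableSpace 𝒴₂] [MeasurableSpace 𝒵₁] [MeasurableSpace 𝒵₂]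

lemma MeasureTheory.MeasurePreserving.miBits_comp {ν : Measure Ω} {ν' : Measure Ω'}
    {F : Ω → Ω'} (hF : MeasurePreserving F ν ν') {X : Ω' → 𝒳} {Y : Ω' → 𝒴}
    (hX : Measurable X) (hY : Measurable Y) :
    miBits ν (fun ω => X (F ω)) (fun ω => Y (F ω)) = miBits ν' X Y := by
  rw [miBits, miBits, ← hF.map_eq, Measure.map_map (hX.prodMk hY) hF.measurable,
    Measure.map_map hX hF.measurable, Measure.map_map hY hF.measurable]
  rfl

lemma MeasureTheory.MeasurePreserving.cmiBits_comp {ν : Measure Ω} {ν' : Measure Ω'}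
    {F : Ω → Ω'} (hF : MeasurePreserving F ν ν') {X : Ω' → 𝒳} {Z : Ω' → 𝒵} {Y : Ω' → 𝒴}
    (hX : Measurable X) (hZ : Measurable Z) (hY : Measurable Y) :
    cmiBits ν (fun ω => X (F ω)) (fun ω => Z (F ω)) (fun ω => Y (F ω)) = cmiBits ν' X Z Y := by
  rw [cmiBits, cmiBits, ← hF.miBits_comp hX hY, ← hF.miBits_comp hX (hZ.prodMk hY)]

variable {μ : Measure Ω} [IsProbabilityMeasure μ]

lemma miBits_measurableEquiv_right {X : Ω → 𝒳} {Y : Ω → 𝒴} (hX : Measurable X)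
    (hY : Measurable Y) (e : 𝒴 ≃ᵐ 𝒴') : miBits μ X (fun ω => e (Y ω)) = miBits μ X Y := by
  have := Measure.isProbabilityMeasure_map (μ := μ) (hX.prodMk hY).aemeasurable
  have := Measure.isProbabilityMeasure_map (μ := μ) hX.aemeasurable
  have := Measure.isProbabilityMeasure_map (μ := μ) hY.aemeasurable
  let E := (MeasurableEquiv.refl 𝒳).prodCongr e
  have hjoint : μ.map (fun ω => (X ω, e (Y ω))) = (μ.map fun ω => (X ω, Y ω)).map E := by
    rw [Measure.map_map E.measurable (hX.prodMk hY)]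
    rfl
  have hmarg : (μ.map X).prod (μ.map fun ω => e (Y ω)) = ((μ.map X).prod (μ.map Y)).map E := by
    have h := Measure.map_prod_map (μ.map X) (μ.map Y) measurable_id e.measurable
    rwa [Measure.map_id, Measure.map_map e.measurable hY] at h
  rw [miBits, miBits, hjoint, hmarg, klBits_map_measurableEquiv]

lemma cmiBits_measurableEquiv_middle {X : Ω → 𝒳} {Z : Ω → 𝒵} {Y : Ω → 𝒴} (hX : Measurable X)
    (hZ : Measurable Z) (hY : Measurable Y) (e : 𝒵 ≃ᵐ 𝒵') :
    cmiBits μ X (fun ω => e (Z ω)) Y = cmiBits μ X Z Y :=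
  congrArg (· - miBits μ X Y)
    (miBits_measurableEquiv_right hX (hZ.prodMk hY) (e.prodCongr (MeasurableEquiv.refl 𝒴)))

theorem miBits_prodMk_eq_add_of_indepFun {X₁ : Ω → 𝒳₁} {Y₁ : Ω → 𝒴₁} {X₂ : Ω → 𝒳₂}
    {Y₂ : Ω → 𝒴₂} (hX₁ : Measurable X₁) (hY₁ : Measurable Y₁) (hX₂ : Measurable X₂)
    (hY₂ : Measurable Y₂) (h : IndepFun (fun ω => (X₁ ω, Y₁ ω)) (fun ω => (X₂ ω, Y₂ ω)) μ) :
    miBits μ (fun ω => (X₁ ω, X₂ ω)) (fun ω => (Y₁ ω, Y₂ ω))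
      = miBits μ X₁ Y₁ + miBits μ X₂ Y₂ := by
  have := Measure.isProbabilityMeasure_map (μ := μ) (hX₁.prodMk hY₁).aemeasurable
  have := Measure.isProbabilityMeasure_map (μ := μ) (hX₂.prodMk hY₂).aemeasurable
  have := Measure.isProbabilityMeasure_map (μ := μ) hX₁.aemeasurable
  have := Measure.isProbabilityMeasure_map (μ := μ) hY₁.aemeasurable
  have := Measure.isProbabilityMeasure_map (μ := μ) hX₂.aemeasurable
  have := Measure.isProbabilityMeasure_map (μ := μ) hY₂.aemeasurable
  have hX : μ.map (fun ω => (X₁ ω, X₂ ω)) = (μ.map X₁).prod (μ.map X₂) :=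
    (h.comp measurable_fst measurable_fst).map_prod_eq_prod_map_map hX₁.aemeasurable
      hX₂.aemeasurable
  have hY : μ.map (fun ω => (Y₁ ω, Y₂ ω)) = (μ.map Y₁).prod (μ.map Y₂) :=
    (h.comp measurable_snd measurable_snd).map_prod_eq_prod_map_map hY₁.aemeasurable
      hY₂.aemeasurable
  rw [miBits, miBits, miBits, h.map_prodMk_prodMk hX₁ hY₁ hX₂ hY₂, hX, hY,
    ← Measure.map_prodProdProdComm_prod, klBits_map_measurableEquiv, klBits_prod]

theorem cmiBits_prodMk_le_add_of_indepFun {X₁ : Ω → 𝒳₁} {Z₁ : Ω → 𝒵₁} {Y₁ : Ω → 𝒴₁}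
    {X₂ : Ω → 𝒳₂} {Z₂ : Ω → 𝒵₂} {Y₂ : Ω → 𝒴₂} (hX₁ : Measurable X₁) (hZ₁ : Measurable Z₁)
    (hY₁ : Measurable Y₁) (hX₂ : Measurable X₂) (hZ₂ : Measurable Z₂) (hY₂ : Measurable Y₂)
    (h : IndepFun (fun ω => (X₁ ω, Z₁ ω, Y₁ ω)) (fun ω => (X₂ ω, Z₂ ω, Y₂ ω)) μ) :
    cmiBits μ (fun ω => (X₁ ω, X₂ ω)) (fun ω => (Z₁ ω, Z₂ ω)) (fun ω => (Y₁ ω, Y₂ ω))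
      ≤ cmiBits μ X₁ Z₁ Y₁ + cmiBits μ X₂ Z₂ Y₂ := by
  have hXZY : miBits μ (fun ω => (X₁ ω, X₂ ω)) (fun ω => ((Z₁ ω, Z₂ ω), (Y₁ ω, Y₂ ω)))
      = miBits μ X₁ (fun ω => (Z₁ ω, Y₁ ω)) + miBits μ X₂ (fun ω => (Z₂ ω, Y₂ ω)) :=
    (miBits_measurableEquiv_right (hX₁.prodMk hX₂)
    ((hZ₁.prodMk hY₁).prodMk (hZ₂.prodMk hY₂)) (MeasurableEquiv.prodProdProdComm _ _ _ _)).trans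
      (miBits_prodMk_eq_add_of_indepFun hX₁ (hZ₁.prodMk hY₁) hX₂ (hZ₂.prodMk hY₂) h)
  have hXY := miBits_prodMk_eq_add_of_indepFun hX₁ hY₁ hX₂ hY₂
    (h.comp (measurable_fst.prodMk measurable_snd.snd) (measurable_fst.prodMk measurable_snd.snd))
  rw [cmiBits, cmiBits, cmiBits, hXZY, hXY]
  exact add_tsub_add_le_tsub_add_tsub

end MutualInformation

section FunctionalRepresentation

variable {𝒳 𝒴 𝒵 𝒵' 𝒳₁ 𝒳₂ 𝒴₁ 𝒴₂ 𝒵₁ 𝒵₂ : Type*} [MeasurableSpace 𝒳] [MeasurableSpace 𝒴]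
  [MeasurableSpace 𝒵] [MeasurableSpace 𝒵'] [MeasurableSpace 𝒳₁] [MeasurableSpace 𝒳₂]
  [MeasurableSpace 𝒴₁] [MeasurableSpace 𝒴₂] [MeasurableSpace 𝒵₁] [MeasurableSpace 𝒵₂]

/-- The constraints in the definition of `excessFI ν`, with the auxiliary variable `Z` taking
values in an arbitrary space `𝒵`. -/
structure IsFunctionalRep (ν : Measure (𝒳 × 𝒴)) (ρ : Measure (𝒳 × 𝒴 × 𝒵)) : Prop where
  isProbabilityMeasure : IsProbabilityMeasure ρ
  map_eq : ρ.map (fun p => (p.1, p.2.1)) = ν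
  indepFun : IndepFun (fun p => p.1) (fun p => p.2.2) ρ
  exists_ae_eq : ∃ g : 𝒳 × 𝒵 → 𝒴, Measurable g ∧
    (fun p : 𝒳 × 𝒴 × 𝒵 => p.2.1) =ᵐ[ρ] fun p => g (p.1, p.2.2)

/-- `I(X;Z|Y)` for `(X, Y, Z) ∼ ρ`. -/
def repExcess (ρ : Measure (𝒳 × 𝒴 × 𝒵)) : ℝ≥0∞ :=
  cmiBits ρ (fun p => p.1) (fun p => p.2.2) (fun p => p.2.1)

lemma excessFI_le_repExcess_real {ν : Measure (𝒳 × 𝒴)} {ρ : Measure (𝒳 × 𝒴 × ℝ)}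
    (h : IsFunctionalRep ν ρ) : excessFI ν ≤ repExcess ρ :=
  sInf_le ⟨ρ, h.isProbabilityMeasure, h.map_eq, h.indepFun, h.exists_ae_eq, rfl⟩

lemma le_excessFI_add_excessFI {ν₁ : Measure (𝒳₁ × 𝒴₁)} {ν₂ : Measure (𝒳₂ × 𝒴₂)} {c : ℝ≥0∞}
    (h : ∀ (ρ₁ : Measure (𝒳₁ × 𝒴₁ × ℝ)) (ρ₂ : Measure (𝒳₂ × 𝒴₂ × ℝ)),
      IsFunctionalRep ν₁ ρ₁ → IsFunctionalRep ν₂ ρ₂ → c ≤ repExcess ρ₁ + repExcess ρ₂) :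
    c ≤ excessFI ν₁ + excessFI ν₂ := by
  rw [excessFI, ENNReal.sInf_add]
  refine le_iInf₂ ?_
  rintro _ ⟨ρ₁, hprob₁, hmap₁, hindep₁, hfun₁, rfl⟩
  rw [excessFI, ENNReal.add_sInf]
  refine le_iInf₂ ?_
  rintro _ ⟨ρ₂, hprob₂, hmap₂, hindep₂, hfun₂, rfl⟩
  exact h ρ₁ ρ₂ ⟨hprob₁, hmap₁, hindep₁, hfun₁⟩ ⟨hprob₂, hmap₂, hindep₂, hfun₂⟩

lemma measurableEmbedding_congr_snd_snd (e : 𝒵 ≃ᵐ 𝒵') :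
    MeasurableEmbedding fun p : 𝒳 × 𝒴 × 𝒵 => (p.1, p.2.1, e p.2.2) :=
  ((MeasurableEquiv.refl 𝒳).prodCongr ((MeasurableEquiv.refl 𝒴).prodCongr e)).measurableEmbedding

lemma IsFunctionalRep.map_measurableEquiv {ν : Measure (𝒳 × 𝒴)} {ρ : Measure (𝒳 × 𝒴 × 𝒵)}
    (h : IsFunctionalRep ν ρ) (e : 𝒵 ≃ᵐ 𝒵') :
    IsFunctionalRep ν (ρ.map fun p => (p.1, p.2.1, e p.2.2)) := by
  have hE := measurableEmbedding_congr_snd_snd (𝒳 := 𝒳) (𝒴 := 𝒴) e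
  have := h.isProbabilityMeasure
  obtain ⟨g, hg, hY⟩ := h.exists_ae_eq
  refine ⟨Measure.isProbabilityMeasure_map hE.measurable.aemeasurable,
    (Measure.map_map (measurable_fst.prodMk measurable_snd.fst) hE.measurable).trans h.map_eq,
    (indepFun_map_iff hE.measurable measurable_fst measurable_snd.snd).mpr
      (h.indepFun.comp measurable_id e.measurable),
    ⟨fun q => g (q.1, e.symm q.2), hg.comp (measurable_fst.prodMk
      (e.symm.measurable.comp measurable_snd)), hE.ae_map_iff.mpr ?_⟩⟩
  filter_upwards [hY] with p hp
  simpa using hp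

lemma repExcess_map_measurableEquiv (ρ : Measure (𝒳 × 𝒴 × 𝒵)) [IsProbabilityMeasure ρ]
    (e : 𝒵 ≃ᵐ 𝒵') : repExcess (ρ.map fun p => (p.1, p.2.1, e p.2.2)) = repExcess ρ :=
  (((measurableEmbedding_congr_snd_snd e).measurable.measurePreserving ρ).cmiBits_comp
    measurable_fst measurable_snd.snd measurable_snd.fst).symm.trans
      (cmiBits_measurableEquiv_middle measurable_fst measurable_snd.snd measurable_snd.fst e)

theorem excessFI_le_repExcess [StandardBorelSpace 𝒵] [Uncountable 𝒵] {ν : Measure (𝒳 × 𝒴)}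
    {ρ : Measure (𝒳 × 𝒴 × 𝒵)} (h : IsFunctionalRep ν ρ) : excessFI ν ≤ repExcess ρ := by
  have := h.isProbabilityMeasure
  let e : 𝒵 ≃ᵐ ℝ := PolishSpace.measurableEquivOfNotCountable not_countable not_countable
  calc excessFI ν ≤ repExcess (ρ.map fun p => (p.1, p.2.1, e p.2.2)) :=
        excessFI_le_repExcess_real (h.map_measurableEquiv e)
    _ = repExcess ρ := repExcess_map_measurableEquiv ρ e

end FunctionalRepresentation

section Product

variable {𝒳₁ 𝒳₂ 𝒴₁ 𝒴₂ 𝒵₁ 𝒵₂ : Type*} [MeasurableSpace 𝒳₁] [MeasurableSpace 𝒳₂]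
  [MeasurableSpace 𝒴₁] [MeasurableSpace 𝒴₂] [MeasurableSpace 𝒵₁] [MeasurableSpace 𝒵₂]
  {ν₁ : Measure (𝒳₁ × 𝒴₁)} {ν₂ : Measure (𝒳₂ × 𝒴₂)}
  {ρ₁ : Measure (𝒳₁ × 𝒴₁ × 𝒵₁)} {ρ₂ : Measure (𝒳₂ × 𝒴₂ × 𝒵₂)}

lemma measurableEmbedding_regroup :
    MeasurableEmbedding fun p : (𝒳₁ × 𝒴₁ × 𝒵₁) × (𝒳₂ × 𝒴₂ × 𝒵₂) =>
      ((p.1.1, p.2.1), (p.1.2.1, p.2.2.1), (p.1.2.2, p.2.2.2)) :=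
  ((MeasurableEquiv.prodProdProdComm _ _ _ _).trans ((MeasurableEquiv.refl _).prodCongr
    (MeasurableEquiv.prodProdProdComm _ _ _ _))).measurableEmbedding

lemma IsFunctionalRep.prod (h₁ : IsFunctionalRep ν₁ ρ₁) (h₂ : IsFunctionalRep ν₂ ρ₂) :
    IsFunctionalRep ((ν₁.prod ν₂).map (MeasurableEquiv.prodProdProdComm 𝒳₁ 𝒴₁ 𝒳₂ 𝒴₂))
      ((ρ₁.prod ρ₂).map fun p => ((p.1.1, p.2.1), (p.1.2.1, p.2.2.1), (p.1.2.2, p.2.2.2))) := by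
  have hR := measurableEmbedding_regroup (𝒳₁ := 𝒳₁) (𝒴₁ := 𝒴₁) (𝒵₁ := 𝒵₁) (𝒳₂ := 𝒳₂)
    (𝒴₂ := 𝒴₂) (𝒵₂ := 𝒵₂)
  have := h₁.isProbabilityMeasure
  have := h₂.isProbabilityMeasure
  obtain ⟨g₁, hg₁, hY₁⟩ := h₁.exists_ae_eq
  obtain ⟨g₂, hg₂, hY₂⟩ := h₂.exists_ae_eq
  have hπ₁ : Measurable fun q : 𝒳₁ × 𝒴₁ × 𝒵₁ => (q.1, q.2.1) :=
    measurable_fst.prodMk measurable_snd.fst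
  have hπ₂ : Measurable fun q : 𝒳₂ × 𝒴₂ × 𝒵₂ => (q.1, q.2.1) :=
    measurable_fst.prodMk measurable_snd.fst
  refine ⟨Measure.isProbabilityMeasure_map hR.measurable.aemeasurable, ?_,
    (indepFun_map_iff hR.measurable measurable_fst measurable_snd.snd).mpr
      (h₁.indepFun.prodMap measurable_fst measurable_snd.snd measurable_fst measurable_snd.snd
        h₂.indepFun),
    ⟨fun q => (g₁ (q.1.1, q.2.1), g₂ (q.1.2, q.2.2)), by fun_prop, hR.ae_map_iff.mpr ?_⟩⟩
  · rw [Measure.map_map (measurable_fst.prodMk measurable_snd.fst) hR.measurable,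
      ← h₁.map_eq, ← h₂.map_eq, Measure.map_prod_map _ _ hπ₁ hπ₂,
      Measure.map_map (MeasurableEquiv.measurable _) (hπ₁.prodMap hπ₂)]
    rfl
  · filter_upwards [measurePreserving_fst.quasiMeasurePreserving.ae hY₁,
      measurePreserving_snd.quasiMeasurePreserving.ae hY₂] with p hp₁ hp₂
    exact Prod.ext hp₁ hp₂

lemma repExcess_prod_le (h₁ : IsFunctionalRep ν₁ ρ₁) (h₂ : IsFunctionalRep ν₂ ρ₂) :
    repExcess ((ρ₁.prod ρ₂).map fun p => ((p.1.1, p.2.1), (p.1.2.1, p.2.2.1), (p.1.2.2, p.2.2.2)))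
      ≤ repExcess ρ₁ + repExcess ρ₂ := by
  have := h₁.isProbabilityMeasure
  have := h₂.isProbabilityMeasure
  have hXZY₁ : Measurable fun q : 𝒳₁ × 𝒴₁ × 𝒵₁ => (q.1, q.2.2, q.2.1) := by fun_prop
  have hXZY₂ : Measurable fun q : 𝒳₂ × 𝒴₂ × 𝒵₂ => (q.1, q.2.2, q.2.1) := by fun_prop
  calc repExcess ((ρ₁.prod ρ₂).map _)
      = cmiBits (ρ₁.prod ρ₂) (fun p => (p.1.1, p.2.1)) (fun p => (p.1.2.2, p.2.2.2))
          (fun p => (p.1.2.1, p.2.2.1)) :=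
        ((measurableEmbedding_regroup.measurable.measurePreserving _).cmiBits_comp
          measurable_fst measurable_snd.snd measurable_snd.fst).symm
    _ ≤ cmiBits (ρ₁.prod ρ₂) (fun p => p.1.1) (fun p => p.1.2.2) (fun p => p.1.2.1)
          + cmiBits (ρ₁.prod ρ₂) (fun p => p.2.1) (fun p => p.2.2.2) (fun p => p.2.2.1) :=
        cmiBits_prodMk_le_add_of_indepFun (by fun_prop) (by fun_prop) (by fun_prop)
          (by fun_prop) (by fun_prop) (by fun_prop) (indepFun_prod hXZY₁ hXZY₂)
    _ = repExcess ρ₁ + repExcess ρ₂ := congrArg₂ (· + ·)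
        (measurePreserving_fst.cmiBits_comp measurable_fst measurable_snd.snd measurable_snd.fst)
        (measurePreserving_snd.cmiBits_comp measurable_fst measurable_snd.snd measurable_snd.fst)

end Product

theorem excessFI_map_prodProdProdComm_prod_le {𝒳₁ 𝒳₂ 𝒴₁ 𝒴₂ : Type*} [MeasurableSpace 𝒳₁]
    [MeasurableSpace 𝒳₂] [MeasurableSpace 𝒴₁] [MeasurableSpace 𝒴₂] (ν₁ : Measure (𝒳₁ × 𝒴₁))
    (ν₂ : Measure (𝒳₂ × 𝒴₂)) :
    excessFI ((ν₁.prod ν₂).map (MeasurableEquiv.prodProdProdComm 𝒳₁ 𝒴₁ 𝒳₂ 𝒴₂))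
      ≤ excessFI ν₁ + excessFI ν₂ :=
  le_excessFI_add_excessFI fun _ _ h₁ h₂ =>
    (excessFI_le_repExcess (h₁.prod h₂)).trans (repExcess_prod_le h₁ h₂)

/-- **Subadditivity of the excess functional information** (Proposition 3.3):
if `(X₁,Y₁) ⫫ (X₂,Y₂)`, then `Ψ((X₁,X₂) → (Y₁,Y₂)) ≤ Ψ(X₁ → Y₁) + Ψ(X₂ → Y₂)`. -/
theorem excessFI_subadditivity
    {Ω 𝒳₁ 𝒳₂ 𝒴₁ 𝒴₂ : Type*} [MeasurableSpace Ω]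
    [MeasurableSpace 𝒳₁] [MeasurableSpace 𝒳₂] [MeasurableSpace 𝒴₁] [MeasurableSpace 𝒴₂]
    (μ : Measure Ω) [IsProbabilityMeasure μ]
    (X₁ : Ω → 𝒳₁) (X₂ : Ω → 𝒳₂) (Y₁ : Ω → 𝒴₁) (Y₂ : Ω → 𝒴₂)
    (hX₁ : Measurable X₁) (hX₂ : Measurable X₂)
    (hY₁ : Measurable Y₁) (hY₂ : Measurable Y₂)
    -- (X₁,Y₁) ⫫ (X₂,Y₂)
    (hindep : IndepFun (fun ω => (X₁ ω, Y₁ ω)) (fun ω => (X₂ ω, Y₂ ω)) μ) :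
    excessFIRV μ (fun ω => (X₁ ω, X₂ ω)) (fun ω => (Y₁ ω, Y₂ ω)) ≤
      excessFIRV μ X₁ Y₁ + excessFIRV μ X₂ Y₂ := by
  rw [excessFIRV, excessFIRV, excessFIRV, hindep.map_prodMk_prodMk hX₁ hY₁ hX₂ hY₂]
  exact excessFI_map_prodProdProdComm_prod_le _ _
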